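/- arXiv:2209.08249 — 3 statements merged into one kernel-verified Lean document; each statement's English description precedes it below -/
import Mathlib

section
/- For every t > 0 and every κ ≥ 1, √(ln(2+κt))/(1+t) ≤ 2√(ln(1+κ)). -/
/-!
Since `2 + κt ≤ (1 + κ)(1 + t)` and `√·` is subadditive on `[0, ∞)`,
`√(ln(2 + κt)) ≤ √(ln(1 + κ)) + √(ln(1 + t))`. Dividing by `1 + t ≥ 1`, the first term stays at most
`√(ln(1 + κ))` and the second becomes at most `1/2`, because `ln x ≤ x - 1 ≤ x² / 4`. Finally
`1/2 ≤ √(ln 2) ≤ √(ln(1 + κ))` as `ln 2 > 1/4`.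
-/

open Real

lemma sqrt_add_le_sqrt_add_sqrt {a b : ℝ} (ha : 0 ≤ a) (hb : 0 ≤ b) : √(a + b) ≤ √a + √b := by
  rw [sqrt_le_iff]
  refine ⟨by positivity, ?_⟩
  nlinarith [sq_sqrt ha, sq_sqrt hb, mul_nonneg (sqrt_nonneg a) (sqrt_nonneg b)]

lemma sqrt_log_mul_le {x y : ℝ} (hx : 1 ≤ x) (hy : 1 ≤ y) :
    √(log (x * y)) ≤ √(log x) + √(log y) := by
  rw [log_mul (by positivity) (by positivity)]
  exact sqrt_add_le_sqrt_add_sqrt (log_nonneg hx) (log_nonneg hy)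

lemma two_add_mul_le_one_add_mul_one_add {κ t : ℝ} (h : 1 ≤ κ + t) :
    2 + κ * t ≤ (1 + κ) * (1 + t) := by
  nlinarith

lemma log_le_sq_div_four {x : ℝ} (hx : 0 < x) : log x ≤ x ^ 2 / 4 := by
  nlinarith [log_le_sub_one_of_pos hx, sq_nonneg (x - 2)]

lemma sqrt_log_div_self_le_half {x : ℝ} (hx : 0 < x) : √(log x) / x ≤ 1 / 2 := by
  rw [div_le_iff₀ hx, sqrt_le_iff]
  refine ⟨by positivity, ?_⟩
  linarith [log_le_sq_div_four hx]

lemma half_le_sqrt_log {x : ℝ} (hx : 2 ≤ x) : 1 / 2 ≤ √(log x) := by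
  rw [le_sqrt (by norm_num) (log_nonneg (by linarith))]
  linarith [log_two_gt_d9, log_le_log (by norm_num) hx]

theorem sqrt_log_ineq (t κ : ℝ) (ht : 0 < t) (hκ : 1 ≤ κ) :
    Real.sqrt (Real.log (2 + κ * t)) / (1 + t) ≤ 2 * Real.sqrt (Real.log (1 + κ)) := by
  have hsplit : √(log (2 + κ * t)) ≤ √(log (1 + κ)) + √(log (1 + t)) :=
    (sqrt_le_sqrt (log_le_log (by positivity)
      (two_add_mul_le_one_add_mul_one_add (by linarith)))).trans
      (sqrt_log_mul_le (by linarith) (by linarith))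
  have hκ_term : √(log (1 + κ)) / (1 + t) ≤ √(log (1 + κ)) :=
    div_le_self (sqrt_nonneg _) (by linarith)
  have ht_term : √(log (1 + t)) / (1 + t) ≤ 1 / 2 := sqrt_log_div_self_le_half (by linarith)
  calc √(log (2 + κ * t)) / (1 + t)
      ≤ √(log (1 + κ)) / (1 + t) + √(log (1 + t)) / (1 + t) := by
        rw [← add_div]; gcongr
    _ ≤ √(log (1 + κ)) + 1 / 2 := add_le_add hκ_term ht_term
    _ ≤ 2 * √(log (1 + κ)) := by linarith [half_le_sqrt_log (show 2 ≤ 1 + κ by linarith)]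
end

section
/- Let Ψ_α : C_{(0)} → C_{(0)} be defined by Ψ_α(f)(t) = f(t) − α∫₀^t e^{−α(t−s)} f(s) ds, where α > 0 and C_{(0)} is the space of continuous functions f on [0,∞) with f(0)=0 and lim_{t→∞} |f(t)|/t = 0, equipped with the norm ‖f‖ = sup_{t>0} |f(t)|/(1+t). Then Ψ_α is a linear operator mapping C_{(0)} into itself with ‖Ψ_α(f)‖ ≤ 2‖f‖ for all f ∈ C_{(0)}. -/
open MeasureTheory Filter

/-- `f` belongs to the space `C_{(0)}` of continuous functions on `[0,∞)` with `f(0) = 0`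
and `lim_{t→∞} |f(t)|/t = 0`. -/
def IsC0 (f : ℝ → ℝ) : Prop :=
  ContinuousOn f (Set.Ici 0) ∧ f 0 = 0 ∧
    Tendsto (fun t => |f t| / t) atTop (nhds 0)

/-- The norm `‖f‖_{(0)} = sup_{t>0} |f(t)|/(1+t)` on `C_{(0)}`. -/
noncomputable def C0norm (f : ℝ → ℝ) : ℝ :=
  ⨆ t : Set.Ioi (0:ℝ), |f t| / (1 + (t : ℝ))

/-- `Ψ_α(f)(t) = f(t) - α ∫₀ᵗ e^{-α(t-s)} f(s) ds`. -/
noncomputable def PsiAlpha (α : ℝ) (f : ℝ → ℝ) : ℝ → ℝ :=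
  fun t => f t - α * ∫ s in (0:ℝ)..t, Real.exp (-α * (t - s)) * f s

section Aux

variable {α : ℝ}

lemma expIntegrand_cont (α t : ℝ) : Continuous fun s : ℝ => Real.exp (-α * (t - s)) :=
  Real.continuous_exp.comp (by continuity)

lemma integrable_aux (α : ℝ) (f : ℝ → ℝ) (hf : ContinuousOn f (Set.Ici 0)) {t : ℝ}
    (ht : 0 ≤ t) :
    IntervalIntegrable (fun s => Real.exp (-α * (t - s)) * f s) volume 0 t := by
  apply ContinuousOn.intervalIntegrable
  apply (expIntegrand_cont α t).continuousOn.mul (hf.mono ?_)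
  rw [Set.uIcc_of_le ht]
  exact fun x hx => hx.1

lemma integral_exp_aux (hα : 0 < α) (t : ℝ) :
    ∫ s in (0:ℝ)..t, Real.exp (-α * (t - s)) = (1 - Real.exp (-α * t)) / α := by
  have hderiv : ∀ s : ℝ, HasDerivAt (fun u => Real.exp (-α * (t - u)) / α)
      (Real.exp (-α * (t - s))) s := by
    intro s
    have h1 : HasDerivAt (fun u : ℝ => -α * (t - u)) α s := by
      have := ((hasDerivAt_id s).const_sub t).const_mul (-α)
      refine this.congr_deriv ?_
      ring
    have h2 := (h1.exp).div_const α
    refine h2.congr_deriv ?_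
    field_simp
  have := intervalIntegral.integral_eq_sub_of_hasDerivAt
    (fun s _ => hderiv s) ((expIntegrand_cont α t).intervalIntegrable 0 t)
  rw [this]
  simp [sub_div]

lemma key_bound (hα : 0 < α) (f : ℝ → ℝ) (hf : ContinuousOn f (Set.Ici 0))
    {t B : ℝ} (ht : 0 ≤ t) (hB : ∀ s ∈ Set.Icc 0 t, |f s| ≤ B) :
    α * |∫ s in (0:ℝ)..t, Real.exp (-α * (t - s)) * f s| ≤ B := by
  have hB0 : 0 ≤ B := le_trans (abs_nonneg _) (hB 0 ⟨le_rfl, ht⟩)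
  have h1 : |∫ s in (0:ℝ)..t, Real.exp (-α * (t - s)) * f s| ≤
      ∫ s in (0:ℝ)..t, Real.exp (-α * (t - s)) * B := by
    refine le_trans (intervalIntegral.abs_integral_le_integral_abs ht) ?_
    refine intervalIntegral.integral_mono_on ht ((integrable_aux α f hf ht).abs)
      (((expIntegrand_cont α t).mul continuous_const).intervalIntegrable 0 t) ?_
    intro x hx
    rw [abs_mul, abs_of_pos (Real.exp_pos _)]
    exact mul_le_mul_of_nonneg_left (hB x hx) (Real.exp_pos _).le
  have h2 : ∫ s in (0:ℝ)..t, Real.exp (-α * (t - s)) * B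
      = (1 - Real.exp (-α * t)) / α * B := by
    rw [intervalIntegral.integral_mul_const, integral_exp_aux hα]
  have hexp : 0 < Real.exp (-α * t) := Real.exp_pos _
  calc α * |∫ s in (0:ℝ)..t, Real.exp (-α * (t - s)) * f s|
      ≤ α * ((1 - Real.exp (-α * t)) / α * B) := by
        apply mul_le_mul_of_nonneg_left _ hα.le
        rw [← h2]; exact h1
    _ = (1 - Real.exp (-α * t)) * B := by field_simp
    _ ≤ 1 * B := mul_le_mul_of_nonneg_right (by linarith) hB0
    _ = B := one_mul B

lemma sup_bound (f : ℝ → ℝ) (hc : ContinuousOn f (Set.Ici 0)) {t : ℝ} (ht : 0 ≤ t) :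
    ∀ s ∈ Set.Icc 0 t, |f s| ≤ sSup ((fun s => |f s|) '' Set.Icc 0 t) := by
  intro s hs
  apply le_csSup
  · exact (isCompact_Icc.image_of_continuousOn
      ((hc.mono (fun x hx => hx.1)).abs)).bddAbove
  · exact ⟨s, hs, rfl⟩

lemma bdd_aux (f : ℝ → ℝ) (hf : IsC0 f) :
    BddAbove (Set.range fun t : Set.Ioi (0:ℝ) => |f t| / (1 + (t : ℝ))) := by
  obtain ⟨hc, h0, hlim⟩ := hf
  obtain ⟨M, hM⟩ := eventually_atTop.mp (hlim.eventually (gt_mem_nhds one_pos))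
  set M' := max M 1 with hM'
  have hM'0 : (0:ℝ) ≤ M' := le_trans zero_le_one (le_max_right M 1)
  refine ⟨max (sSup ((fun s => |f s|) '' Set.Icc 0 M')) 1, ?_⟩
  rintro x ⟨⟨t, ht⟩, rfl⟩
  simp only
  have ht0 : (0:ℝ) < t := ht
  rcases le_or_gt t M' with h | h
  · refine le_trans ?_ (le_max_left _ _)
    refine le_trans (div_le_self (abs_nonneg _) (by linarith)) ?_
    exact sup_bound f hc hM'0 t ⟨ht0.le, h⟩
  · refine le_trans ?_ (le_max_right _ _)
    have hMt : M ≤ t := le_trans (le_max_left M 1) h.le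
    have := hM t hMt
    rw [div_lt_one ht0] at this
    rw [div_le_one (by linarith)]
    linarith

lemma norm_nonneg_aux (f : ℝ → ℝ) (hf : IsC0 f) : 0 ≤ C0norm f := by
  have h := le_ciSup (bdd_aux f hf) (⟨1, by norm_num⟩ : Set.Ioi (0:ℝ))
  refine le_trans ?_ h
  positivity

lemma abs_le_norm (f : ℝ → ℝ) (hf : IsC0 f) {s : ℝ} (hs : 0 ≤ s) :
    |f s| ≤ C0norm f * (1 + s) := by
  rcases eq_or_lt_of_le hs with h | h
  · rw [← h, hf.2.1, abs_zero]
    have := norm_nonneg_aux f hf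
    nlinarith
  · have h2 := le_ciSup (bdd_aux f hf) (⟨s, h⟩ : Set.Ioi (0:ℝ))
    simp only at h2
    rw [div_le_iff₀ (by linarith)] at h2
    exact h2

lemma tendsto_sup (f : ℝ → ℝ) (hf : IsC0 f) :
    Tendsto (fun t => sSup ((fun s => |f s|) '' Set.Icc 0 t) / t) atTop (nhds 0) := by
  obtain ⟨hc, h0, hlim⟩ := hf
  rw [Metric.tendsto_atTop]
  intro ε hε
  obtain ⟨M, hM⟩ := eventually_atTop.mp (hlim.eventually (gt_mem_nhds (half_pos hε)))
  set M' := max M 1 with hM'def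
  have hM'0 : (0:ℝ) ≤ M' := le_trans zero_le_one (le_max_right M 1)
  set C := sSup ((fun s => |f s|) '' Set.Icc 0 M') with hCdef
  have hC0 : 0 ≤ C := le_trans (abs_nonneg _) (sup_bound f hc hM'0 0 ⟨le_rfl, hM'0⟩)
  refine ⟨max M' (2 * C / ε + 1), fun t ht => ?_⟩
  have htM : M' ≤ t := le_trans (le_max_left _ _) ht
  have ht1 : (1:ℝ) ≤ t := le_trans (le_max_right M 1) htM
  have ht0 : (0:ℝ) < t := by linarith
  have htC : 2 * C / ε + 1 ≤ t := le_trans (le_max_right _ _) ht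
  have hBle : sSup ((fun s => |f s|) '' Set.Icc 0 t) ≤ max C (ε / 2 * t) := by
    apply csSup_le ((Set.nonempty_Icc.mpr ht0.le).image _)
    rintro x ⟨s, hs, rfl⟩
    rcases le_or_gt s M' with h | h
    · exact le_max_of_le_left (sup_bound f hc hM'0 s ⟨hs.1, h⟩)
    · have hsM : M ≤ s := le_trans (le_max_left M 1) h.le
      have hs0 : (0:ℝ) < s := lt_of_lt_of_le (lt_of_lt_of_le one_pos (le_max_right M 1)) h.le
      have h1 := hM s hsM
      rw [div_lt_iff₀ hs0] at h1
      refine le_max_of_le_right (le_trans h1.le ?_)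
      have := hs.2
      nlinarith
  have hB0 : 0 ≤ sSup ((fun s => |f s|) '' Set.Icc 0 t) :=
    le_trans (abs_nonneg _) (sup_bound f hc ht0.le 0 ⟨le_rfl, ht0.le⟩)
  rw [Real.dist_eq, sub_zero, abs_of_nonneg (div_nonneg hB0 ht0.le), div_lt_iff₀ ht0]
  refine lt_of_le_of_lt hBle (max_lt ?_ ?_)
  · have hεt : ε * (2 * C / ε + 1) = 2 * C + ε := by field_simp
    nlinarith
  · nlinarith

lemma psi_rep (α : ℝ) (f : ℝ → ℝ) : PsiAlpha α f = fun t =>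
    f t - α * (Real.exp (-α * t) * ∫ s in (0:ℝ)..t, Real.exp (α * s) * f s) := by
  funext t
  unfold PsiAlpha
  have h : ∀ s : ℝ, Real.exp (-α * (t - s)) * f s
      = Real.exp (-α * t) * (Real.exp (α * s) * f s) := by
    intro s
    rw [← mul_assoc, ← Real.exp_add]
    congr 2
    ring
  simp_rw [h, intervalIntegral.integral_const_mul]

lemma cont_aux (α : ℝ) (f : ℝ → ℝ) (hf : IsC0 f) :
    ContinuousOn (PsiAlpha α f) (Set.Ici 0) := by
  rw [psi_rep]
  refine hf.1.sub (continuousOn_const.mul (ContinuousOn.mul ?_ ?_))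
  · exact (Real.continuous_exp.comp (continuous_const.mul continuous_id)).continuousOn
  · intro t ht
    have hT : t < t + 1 := by linarith
    have ht0 : (0:ℝ) ≤ t := ht
    have hcont : ContinuousOn (fun s => Real.exp (α * s) * f s) (Set.Ici 0) :=
      (Real.continuous_exp.comp (continuous_const.mul continuous_id)).continuousOn.mul hf.1
    have hint : IntegrableOn (fun s => Real.exp (α * s) * f s)
        (Set.uIcc 0 (t + 1)) volume := by
      rw [Set.uIcc_of_le (by linarith)]
      exact (hcont.mono (fun x hx => hx.1)).integrableOn_Icc
    have hc := intervalIntegral.continuousOn_primitive_interval hint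
    rw [Set.uIcc_of_le (by linarith)] at hc
    have h1 : ContinuousWithinAt (fun x => ∫ s in (0:ℝ)..x, Real.exp (α * s) * f s)
        (Set.Icc 0 (t + 1)) t := hc t ⟨ht0, by linarith⟩
    have h2 := h1.mono (s := Set.Ici 0 ∩ Set.Iio (t + 1))
      (fun x hx => ⟨hx.1, hx.2.le⟩)
    exact (continuousWithinAt_inter (Iio_mem_nhds hT)).mp h2

end Aux

/-- For `α > 0`, `Ψ_α` is a linear operator mapping `C_{(0)}` into itself with
`‖Ψ_α(f)‖_{(0)} ≤ 2 ‖f‖_{(0)}`. -/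
theorem psiAlpha_linear_bounded (α : ℝ) (hα : 0 < α) :
    (∀ f : ℝ → ℝ, IsC0 f → IsC0 (PsiAlpha α f)) ∧
    (∀ f g : ℝ → ℝ, IsC0 f → IsC0 g →
      ∀ t : ℝ, 0 ≤ t → PsiAlpha α (f + g) t = PsiAlpha α f t + PsiAlpha α g t) ∧
    (∀ (c : ℝ) (f : ℝ → ℝ), IsC0 f →
      ∀ t : ℝ, 0 ≤ t → PsiAlpha α (c • f) t = c * PsiAlpha α f t) ∧
    (∀ f : ℝ → ℝ, IsC0 f → C0norm (PsiAlpha α f) ≤ 2 * C0norm f) := by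
  refine ⟨?_, ?_, ?_, ?_⟩
  · -- maps C0 to C0
    intro f hf
    refine ⟨cont_aux α f hf, ?_, ?_⟩
    · simp [PsiAlpha, hf.2.1]
    · -- limit
      apply squeeze_zero' (g := fun t => |f t| / t +
        sSup ((fun s => |f s|) '' Set.Icc 0 t) / t)
      · filter_upwards [eventually_ge_atTop (0:ℝ)] with t ht
        positivity
      · filter_upwards [eventually_gt_atTop (0:ℝ)] with t ht
        have hkey := key_bound hα f hf.1 ht.le (sup_bound f hf.1 ht.le)
        have habs : |PsiAlpha α f t| ≤ |f t| +
            sSup ((fun s => |f s|) '' Set.Icc 0 t) := by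
          unfold PsiAlpha
          refine le_trans (abs_sub _ _) ?_
          rw [abs_mul, abs_of_pos hα]
          linarith
        rw [← add_div]
        exact div_le_div_of_nonneg_right habs ht.le
      · simpa using hf.2.2.add (tendsto_sup f hf)
  · -- additivity
    intro f g hf hg t ht
    unfold PsiAlpha
    simp only [Pi.add_apply]
    have h : ∀ s : ℝ, Real.exp (-α * (t - s)) * (f s + g s)
        = Real.exp (-α * (t - s)) * f s + Real.exp (-α * (t - s)) * g s :=
      fun s => mul_add _ _ _
    simp_rw [h]
    rw [intervalIntegral.integral_add (integrable_aux α f hf.1 ht)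
      (integrable_aux α g hg.1 ht)]
    ring
  · -- homogeneity
    intro c f hf t ht
    unfold PsiAlpha
    simp only [Pi.smul_apply, smul_eq_mul]
    have h : ∀ s : ℝ, Real.exp (-α * (t - s)) * (c * f s)
        = c * (Real.exp (-α * (t - s)) * f s) := fun s => by ring
    simp_rw [h]
    rw [intervalIntegral.integral_const_mul]
    ring
  · -- norm bound
    intro f hf
    have hN := norm_nonneg_aux f hf
    rw [C0norm]
    haveI : Nonempty (Set.Ioi (0:ℝ)) := ⟨⟨1, by norm_num⟩⟩
    apply ciSup_le
    rintro ⟨t, ht⟩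
    simp only
    have ht0 : (0:ℝ) < t := ht
    have hB : ∀ s ∈ Set.Icc 0 t, |f s| ≤ C0norm f * (1 + t) := by
      intro s hs
      refine le_trans (abs_le_norm f hf hs.1) ?_
      have := hs.2
      nlinarith
    have hkey := key_bound hα f hf.1 ht0.le hB
    have habs : |PsiAlpha α f t| ≤ 2 * C0norm f * (1 + t) := by
      unfold PsiAlpha
      refine le_trans (abs_sub _ _) ?_
      rw [abs_mul, abs_of_pos hα]
      have := abs_le_norm f hf ht0.le
      linarith
    rw [div_le_iff₀ (by linarith)]
    exact habs
end

section
/- Let α > K ≥ 0, let b : ℝ → ℝ be K-Lipschitz, and let Ψ : C_{(0)} → C_{(0)} map f to the solution y of y(t) = −α∫₀^t y(s)ds + ∫₀^t b(y(s))ds + f(t). Then ‖Ψ(f) − Ψ(g)‖_{(0)} ≤ (2α/(α−K))‖f−g‖_{(0)} for all f, g ∈ C_{(0)}. -/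
/-!
The difference `w = y - z` solves the linear Volterra equation `w = -α∫w + ∫q + h` with
`q = b ∘ y - b ∘ z` and `h = f - g`. Variation of constants gives
`w(t) = h(t) + e^{-αt} ∫₀ᵗ e^{αs} (q(s) - α h(s)) ds`, and since `|q| ≤ K|w|` and
`e^{-αt} ∫₀ᵗ e^{αs} ds ≤ 1/α`, this yields `‖w‖ ≤ 2‖h‖ + (K/α)‖w‖`; `‖w‖` is finite because
`w ∈ C_{(0)}`.
-/

open MeasureTheory Filter

open Set Real Topology

theorem intervalIntegrable_of_continuousOn_Ici {E : Type*} [NormedAddCommGroup E] {f : ℝ → E}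
    {a b : ℝ} (hf : ContinuousOn f (Ici a)) (hab : a ≤ b) : IntervalIntegrable f volume a b :=
  (hf.mono (uIcc_of_le hab ▸ Icc_subset_Ici_self)).intervalIntegrable

theorem hasDerivAt_integral_of_continuousOn_Ici {E : Type*} [NormedAddCommGroup E]
    [NormedSpace ℝ E] [CompleteSpace E] {f : ℝ → E} {a b : ℝ}
    (hf : ContinuousOn f (Ici a)) (hab : a < b) :
    HasDerivAt (fun u => ∫ s in a..u, f s) (f b) b :=
  intervalIntegral.integral_hasDerivAt_right (intervalIntegrable_of_continuousOn_Ici hf hab.le)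
    ((hf.mono Ioi_subset_Ici_self).stronglyMeasurableAtFilter isOpen_Ioi b hab)
    (hf.continuousAt (Ici_mem_nhds hab))

theorem eq_exp_mul_integral_of_hasDerivAt {D G : ℝ → ℝ} {α a b : ℝ} (hab : a ≤ b)
    (hD : ContinuousOn D (Icc a b)) (hD' : ∀ s ∈ Ioo a b, HasDerivAt D (-α * D s + G s) s)
    (hG : IntervalIntegrable G volume a b) (hDa : D a = 0) :
    D b = exp (-(α * b)) * ∫ s in a..b, exp (α * s) * G s := by
  have hexp : Continuous fun s => exp (α * s) := by fun_prop
  have hFTC := intervalIntegral.integral_eq_sub_of_hasDerivAt_of_le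
    (f := fun s => exp (α * s) * D s) hab (hexp.continuousOn.mul hD) (fun s hs => ?_)
    (hG.continuousOn_mul hexp.continuousOn)
  · rw [hFTC, hDa, mul_zero, sub_zero, ← mul_assoc, ← exp_add, neg_add_cancel, exp_zero, one_mul]
  · have hE : HasDerivAt (fun u => exp (α * u)) (exp (α * s) * α) s := by
      simpa using ((hasDerivAt_id s).const_mul α).exp
    exact (hE.mul (hD' s hs)).congr_deriv (by ring)

theorem abs_exp_mul_integral_le {G : ℝ → ℝ} {α a b C : ℝ} (hα : 0 < α) (hab : a ≤ b)
    (hG : ∀ s ∈ Icc a b, |G s| ≤ C) :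
    |exp (-(α * b)) * ∫ s in a..b, exp (α * s) * G s| ≤ C / α := by
  have hC : 0 ≤ C := (abs_nonneg _).trans (hG b ⟨hab, le_rfl⟩)
  have hint : ∫ s in a..b, exp (α * s) = (exp (α * b) - exp (α * a)) / α := by
    simp [intervalIntegral.integral_comp_mul_left (fun s => exp s) hα.ne', integral_exp]
    field_simp
  calc |exp (-(α * b)) * ∫ s in a..b, exp (α * s) * G s|
      = exp (-(α * b)) * |∫ s in a..b, exp (α * s) * G s| := by
        rw [abs_mul, abs_of_pos (exp_pos _)]
    _ ≤ exp (-(α * b)) * ∫ s in a..b, exp (α * s) * C := by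
        gcongr
        refine intervalIntegral.norm_integral_le_of_norm_le (f := fun s => exp (α * s) * G s) hab
          (ae_of_all volume fun s hs => ?_)
          ((by fun_prop : Continuous fun s => exp (α * s) * C).intervalIntegrable a b)
        rw [norm_mul, norm_of_nonneg (exp_pos _).le]
        exact mul_le_mul_of_nonneg_left (hG s (Ioc_subset_Icc_self hs)) (exp_pos _).le
    _ = C * (1 - exp (α * a - α * b)) / α := by
        rw [intervalIntegral.integral_mul_const, hint, exp_sub, exp_neg]
        field_simp
    _ ≤ C / α := by
        gcongr
        exact mul_le_of_le_one_right hC (by linarith [exp_pos (α * a - α * b)])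

theorem eq_add_exp_mul_integral_of_volterra {w q h : ℝ → ℝ} {α t : ℝ}
    (hw : ContinuousOn w (Ici 0)) (hq : ContinuousOn q (Ici 0)) (hh : ContinuousOn h (Ici 0))
    (hvol : ∀ t, 0 ≤ t → w t = -α * (∫ s in (0:ℝ)..t, w s) + (∫ s in (0:ℝ)..t, q s) + h t)
    (ht : 0 ≤ t) :
    w t = h t + exp (-(α * t)) * ∫ s in (0:ℝ)..t, exp (α * s) * (q s - α * h s) := by
  have hD := eq_exp_mul_integral_of_hasDerivAt (D := fun s => w s - h s)
    (G := fun s => q s - α * h s) (α := α) ht ((hw.sub hh).mono Icc_subset_Ici_self)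
    (fun s hs => ?_)
    ((intervalIntegrable_of_continuousOn_Ici hq ht).sub
      ((intervalIntegrable_of_continuousOn_Ici hh ht).const_mul α))
    (sub_eq_zero.2 (by simpa using hvol 0 le_rfl))
  · linarith
  · have hloc : (fun u => w u - h u) =ᶠ[𝓝 s]
        fun u => -α * (∫ r in (0:ℝ)..u, w r) + ∫ r in (0:ℝ)..u, q r := by
      filter_upwards [Ici_mem_nhds hs.1] with u hu
      rw [hvol u hu]
      ring
    refine ((((hasDerivAt_integral_of_continuousOn_Ici hw hs.1).const_mul (-α)).add
      (hasDerivAt_integral_of_continuousOn_Ici hq hs.1)).congr_of_eventuallyEq hloc).congr_deriv ?_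
    ring

namespace IsC0

variable {f g : ℝ → ℝ}

theorem sub (hf : IsC0 f) (hg : IsC0 g) : IsC0 fun t => f t - g t := by
  refine ⟨hf.1.sub hg.1, by simp [hf.2.1, hg.2.1], ?_⟩
  refine squeeze_zero' ?_ ?_ (by simpa using hf.2.2.add hg.2.2) <;>
    filter_upwards [eventually_gt_atTop 0] with t ht
  · positivity
  · rw [← add_div]
    gcongr
    exact abs_sub _ _

theorem bddAbove (hf : IsC0 f) :
    BddAbove (range fun t : Ioi (0:ℝ) => |f t| / (1 + (t:ℝ))) := by
  obtain ⟨T, hT⟩ := eventually_atTop.mp (hf.2.2.eventually_le_const zero_lt_one)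
  obtain ⟨C, hC⟩ := isCompact_Icc.exists_bound_of_continuousOn
    (hf.1.mono (Icc_subset_Ici_self : Icc 0 (max T 0) ⊆ _))
  refine ⟨max C 1, forall_mem_range.2 fun ⟨t, ht⟩ => ?_⟩
  have ht : 0 < t := ht
  rcases le_total t (max T 0) with htT | htT
  · calc |f t| / (1 + t) ≤ |f t| := div_le_self (abs_nonneg _) (by linarith)
      _ ≤ max C 1 := (by simpa using hC t ⟨ht.le, htT⟩ : |f t| ≤ C).trans (le_max_left _ _)
  · calc |f t| / (1 + t) ≤ |f t| / t := by gcongr; linarith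
      _ ≤ max C 1 := (hT t (le_of_max_le_left htT)).trans (le_max_right _ _)

theorem C0norm_nonneg (hf : IsC0 f) : 0 ≤ C0norm f :=
  (by positivity : 0 ≤ |f 1| / (1 + 1)).trans (le_ciSup hf.bddAbove ⟨1, mem_Ioi.2 one_pos⟩)

theorem abs_le_C0norm_mul (hf : IsC0 f) {t : ℝ} (ht : 0 ≤ t) : |f t| ≤ C0norm f * (1 + t) := by
  rcases ht.eq_or_lt with rfl | ht
  · simpa [hf.2.1] using hf.C0norm_nonneg
  · exact (div_le_iff₀ (by linarith)).1 (le_ciSup hf.bddAbove ⟨t, ht⟩)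

end IsC0

theorem C0norm_le {f : ℝ → ℝ} {c : ℝ} (h : ∀ t, 0 < t → |f t| ≤ c * (1 + t)) : C0norm f ≤ c :=
  have : Nonempty (Ioi (0:ℝ)) := ⟨⟨1, mem_Ioi.2 one_pos⟩⟩
  ciSup_le fun ⟨t, ht⟩ => (div_le_iff₀ (by linarith [show (0:ℝ) < t from ht])).2 (h t ht)

theorem sub_mul_C0norm_le_of_volterra {w q h : ℝ → ℝ} {α K : ℝ} (hα : 0 < α) (hK : 0 ≤ K)
    (hw : IsC0 w) (hh : IsC0 h) (hq : ContinuousOn q (Ici 0))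
    (hqw : ∀ s, 0 ≤ s → |q s| ≤ K * |w s|)
    (hvol : ∀ t, 0 ≤ t → w t = -α * (∫ s in (0:ℝ)..t, w s) + (∫ s in (0:ℝ)..t, q s) + h t) :
    (α - K) * C0norm w ≤ 2 * α * C0norm h := by
  set M := C0norm w
  set N := C0norm h
  have hM : M ≤ (2 * α * N + K * M) / α := by
    refine C0norm_le fun t ht => ?_
    have hG : ∀ s ∈ Icc 0 t, |q s - α * h s| ≤ (K * M + α * N) * (1 + t) := by
      intro s hs
      have hle := fun {u : ℝ → ℝ} (hu : IsC0 u) => (hu.abs_le_C0norm_mul hs.1).trans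
        (by gcongr; exacts [hu.C0norm_nonneg, hs.2] : C0norm u * (1 + s) ≤ C0norm u * (1 + t))
      calc |q s - α * h s| ≤ K * |w s| + α * |h s| := by
            refine (abs_sub _ _).trans (add_le_add (hqw s hs.1) ?_)
            rw [abs_mul, abs_of_pos hα]
        _ ≤ K * (M * (1 + t)) + α * (N * (1 + t)) := by gcongr; exacts [hle hw, hle hh]
        _ = (K * M + α * N) * (1 + t) := by ring
    rw [eq_add_exp_mul_integral_of_volterra hw.1 hq hh.1 hvol ht.le]
    calc _ ≤ N * (1 + t) + (K * M + α * N) * (1 + t) / α := (abs_add_le _ _).trans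
          (add_le_add (hh.abs_le_C0norm_mul ht.le) (abs_exp_mul_integral_le hα ht.le hG))
      _ = (2 * α * N + K * M) / α * (1 + t) := by field_simp; ring
  rw [le_div_iff₀ hα] at hM
  linarith

/-- Let `α > K ≥ 0`, let `b` be `K`-Lipschitz, and let `y, z ∈ C_{(0)}` be the solutions of
`y(t) = -α∫₀ᵗ y(s) ds + ∫₀ᵗ b(y(s)) ds + f(t)` corresponding to `f, g ∈ C_{(0)}`.  Then
`‖y - z‖_{(0)} ≤ (2α/(α-K)) ‖f - g‖_{(0)}`. -/
theorem solution_map_C0_lipschitz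
    (α K : ℝ) (hK : 0 ≤ K) (hαK : K < α)
    (b : ℝ → ℝ) (hb : ∀ x y : ℝ, |b x - b y| ≤ K * |x - y|)
    (f g y z : ℝ → ℝ)
    (hf : IsC0 f) (hg : IsC0 g) (hy : IsC0 y) (hz : IsC0 z)
    (hyeq : ∀ t : ℝ, 0 ≤ t →
      y t = -α * (∫ s in (0:ℝ)..t, y s) + (∫ s in (0:ℝ)..t, b (y s)) + f t)
    (hzeq : ∀ t : ℝ, 0 ≤ t →
      z t = -α * (∫ s in (0:ℝ)..t, z s) + (∫ s in (0:ℝ)..t, b (z s)) + g t) :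
    C0norm (fun t => y t - z t) ≤ (2 * α / (α - K)) * C0norm (fun t => f t - g t) := by
  have hbc : Continuous b :=
    (LipschitzWith.of_dist_le' (by simpa only [Real.dist_eq] using hb)).continuous
  have hby : ContinuousOn (fun t => b (y t)) (Ici 0) := hbc.comp_continuousOn hy.1
  have hbz : ContinuousOn (fun t => b (z t)) (Ici 0) := hbc.comp_continuousOn hz.1
  have hvol : ∀ t, 0 ≤ t → y t - z t = -α * (∫ s in (0:ℝ)..t, y s - z s)
      + (∫ s in (0:ℝ)..t, b (y s) - b (z s)) + (f t - g t) := by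
    intro t ht
    have hint := fun {u : ℝ → ℝ} (hu : ContinuousOn u (Ici 0)) =>
      intervalIntegrable_of_continuousOn_Ici hu ht
    rw [intervalIntegral.integral_sub (hint hy.1) (hint hz.1),
      intervalIntegral.integral_sub (hint hby) (hint hbz), hyeq t ht, hzeq t ht]
    ring
  have hest := sub_mul_C0norm_le_of_volterra (hK.trans_lt hαK) hK (hy.sub hz) (hf.sub hg)
    (hby.sub hbz) (fun s _ => hb _ _) hvol
  rw [div_mul_eq_mul_div, le_div_iff₀ (sub_pos.2 hαK)]
  linarith
end
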